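/- arXiv:1804.02949 — 6 statements merged into one kernel-verified Lean document; each statement's English description precedes it below -/
import Mathlib

section
/- Let P be an n×n row-stochastic matrix, α ∈ (0,1), π_v = α·e_vᵀ·(I − (1−α)P)⁻¹, and for ℓ ∈ ℕ let S_ℓ(v) be the set of nodes w for which (e_vᵀ P^j)(w) > 0 for some j ≤ ℓ (the ℓ-step out-neighborhood of v in the graph defined by P). Then ∑_{w ∈ S_ℓ(v)} π_v(w) ≥ 1 − (1−α)^{ℓ+1}. -/
open Matrix

attribute [local instance] Matrix.linftyOpNormedRing Matrix.linftyOpNormedAlgebra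

private lemma geom_aux (α : ℝ) (m : ℕ) :
    ∑ j ∈ Finset.range (m + 1), α * (1 - α) ^ j = 1 - (1 - α) ^ (m + 1) := by
  induction m with
  | zero => ring_nf; simp
  | succ m ih => rw [Finset.sum_range_succ, ih]; ring

/-- PPR concentrates on the ℓ-step out-neighborhood:
∑_{w ∈ S_ℓ(v)} π_v(w) ≥ 1 − (1−α)^{ℓ+1}. -/
theorem stmt3 {n : ℕ} (P : Matrix (Fin n) (Fin n) ℝ)
    (hP0 : ∀ i j, 0 ≤ P i j) (hP1 : ∀ i, ∑ j, P i j = 1)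
    (α : ℝ) (hα0 : 0 < α) (hα1 : α < 1) (v : Fin n) (ℓ : ℕ) :
    1 - (1 - α) ^ (ℓ + 1) ≤
      ∑ w : Fin n,
        Set.indicator {w : Fin n | ∃ j ≤ ℓ, 0 < ((Pi.single v 1 : Fin n → ℝ) ᵥ* P ^ j) w}
          (α • ((Pi.single v 1 : Fin n → ℝ) ᵥ* (1 - (1 - α) • P)⁻¹)) w := by
  classical
  have hxsucc : ∀ j : ℕ, (Pi.single v 1 : Fin n → ℝ) ᵥ* P ^ (j + 1)
      = ((Pi.single v 1 : Fin n → ℝ) ᵥ* P ^ j) ᵥ* P := by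
    intro j
    rw [pow_succ, ← Matrix.vecMul_vecMul]
  have hx0 : ∀ (j : ℕ) (w : Fin n), 0 ≤ ((Pi.single v 1 : Fin n → ℝ) ᵥ* P ^ j) w := by
    intro j
    induction j with
    | zero =>
      intro w
      simp only [pow_zero, Matrix.vecMul_one, Pi.single_apply]
      split <;> norm_num
    | succ j ih =>
      intro w
      rw [hxsucc]
      have hrw : (((Pi.single v 1 : Fin n → ℝ) ᵥ* P ^ j) ᵥ* P) w
          = ∑ i, ((Pi.single v 1 : Fin n → ℝ) ᵥ* P ^ j) i * P i w := rfl
      rw [hrw]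
      exact Finset.sum_nonneg fun i _ => mul_nonneg (ih i) (hP0 i w)
  have hx1 : ∀ j : ℕ, ∑ w, ((Pi.single v 1 : Fin n → ℝ) ᵥ* P ^ j) w = 1 := by
    intro j
    induction j with
    | zero => simp
    | succ j ih =>
      rw [hxsucc]
      have hrw : ∀ w, (((Pi.single v 1 : Fin n → ℝ) ᵥ* P ^ j) ᵥ* P) w
          = ∑ i, ((Pi.single v 1 : Fin n → ℝ) ᵥ* P ^ j) i * P i w := fun w => rfl
      simp_rw [hrw]
      rw [Finset.sum_comm]
      simp_rw [← Finset.mul_sum, hP1, mul_one]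
      exact ih
  set S : Set (Fin n) :=
    {w : Fin n | ∃ j ≤ ℓ, 0 < ((Pi.single v 1 : Fin n → ℝ) ᵥ* P ^ j) w} with hSdef
  set Sf : Finset (Fin n) := Finset.univ.filter (fun w => w ∈ S) with hSfdef
  set t : Matrix (Fin n) (Fin n) ℝ := (1 - α) • P with htdef
  -- norm bound
  have hPn : ‖P‖ ≤ 1 := by
    rw [Matrix.linfty_opNorm_def]
    have hsup : ((Finset.univ : Finset (Fin n)).sup fun i => ∑ j, ‖P i j‖₊) ≤ 1 := by
      apply Finset.sup_le
      intro i _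
      rw [← NNReal.coe_le_coe, NNReal.coe_sum, NNReal.coe_one]
      have heq : ∑ j, (‖P i j‖₊ : ℝ) = ∑ j, P i j := by
        refine Finset.sum_congr rfl fun j _ => ?_
        rw [coe_nnnorm, Real.norm_of_nonneg (hP0 i j)]
      rw [heq, hP1 i]
    exact_mod_cast hsup
  have ht : ‖t‖ < 1 := by
    rw [htdef, norm_smul, Real.norm_of_nonneg (by linarith : (0:ℝ) ≤ 1 - α)]
    calc (1 - α) * ‖P‖ ≤ (1 - α) * 1 := mul_le_mul_of_nonneg_left hPn (by linarith)
      _ < 1 := by linarith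
  have hinv : (1 - t)⁻¹ = Ring.inverse (1 - t) := Matrix.nonsing_inv_eq_ringInverse _
  have hgeom : HasSum (fun j : ℕ => t ^ j) (Ring.inverse (1 - t)) :=
    hasSum_geom_series_inverse t ht
  -- the linear functional M ↦ ∑_{w ∈ Sf} (e_v ᵥ* M) w
  set φ : Matrix (Fin n) (Fin n) ℝ →ₗ[ℝ] ℝ :=
    { toFun := fun M => ∑ w ∈ Sf, ((Pi.single v 1 : Fin n → ℝ) ᵥ* M) w
      map_add' := by
        intro A B
        simp [Matrix.vecMul_add, Finset.sum_add_distrib]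
      map_smul' := by
        intro c A
        simp only [RingHom.id_apply, smul_eq_mul, Finset.mul_sum]
        refine Finset.sum_congr rfl fun w _ => ?_
        simp [Matrix.vecMul, dotProduct, Finset.mul_sum, mul_left_comm] } with hφdef
  have hφc : HasSum (fun j : ℕ => φ (t ^ j)) (φ (Ring.inverse (1 - t))) := by
    have := (LinearMap.toContinuousLinearMap φ).hasSum hgeom
    simpa using this
  have hφsum : HasSum (fun j : ℕ => α * φ (t ^ j)) (α * φ (Ring.inverse (1 - t))) :=
    hφc.mul_left α
  -- term values
  have hterm : ∀ j : ℕ,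
      φ (t ^ j) = (1 - α) ^ j * ∑ w ∈ Sf, ((Pi.single v 1 : Fin n → ℝ) ᵥ* P ^ j) w := by
    intro j
    have h1 : t ^ j = (1 - α) ^ j • P ^ j := by rw [htdef, smul_pow]
    have h2 : ∀ w, ((Pi.single v 1 : Fin n → ℝ) ᵥ* ((1 - α) ^ j • P ^ j)) w
        = (1 - α) ^ j * ((Pi.single v 1 : Fin n → ℝ) ᵥ* P ^ j) w := by
      intro w
      simp [Matrix.vecMul, dotProduct, Finset.mul_sum, mul_left_comm]
    simp only [hφdef, LinearMap.coe_mk, AddHom.coe_mk, h1, h2, ← Finset.mul_sum]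
  have hterm_nonneg : ∀ j : ℕ, 0 ≤ α * φ (t ^ j) := by
    intro j
    rw [hterm]
    have h1a : (0:ℝ) ≤ 1 - α := by linarith
    exact mul_nonneg hα0.le (mul_nonneg (pow_nonneg h1a j)
      (Finset.sum_nonneg fun w _ => hx0 j w))
  have hterm_eq : ∀ j ≤ ℓ, α * φ (t ^ j) = α * (1 - α) ^ j := by
    intro j hj
    rw [hterm]
    have hsum : ∑ w ∈ Sf, ((Pi.single v 1 : Fin n → ℝ) ᵥ* P ^ j) w = 1 := by
      refine (Finset.sum_subset (Finset.subset_univ Sf) fun w _ hw => ?_).trans (hx1 j)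
      by_contra hne
      have hpos : 0 < ((Pi.single v 1 : Fin n → ℝ) ᵥ* P ^ j) w :=
        lt_of_le_of_ne (hx0 j w) (Ne.symm hne)
      exact hw (Finset.mem_filter.mpr ⟨Finset.mem_univ w, ⟨j, hj, hpos⟩⟩)
    rw [hsum, mul_one]
  -- rewrite the goal sum
  have hgoal : ∑ w : Fin n,
      Set.indicator S (α • ((Pi.single v 1 : Fin n → ℝ) ᵥ* (1 - t)⁻¹)) w
      = α * φ (Ring.inverse (1 - t)) := by
    rw [Finset.sum_indicator_eq_sum_filter]
    simp only [hφdef, LinearMap.coe_mk, AddHom.coe_mk, Finset.mul_sum, ← hSfdef, hinv]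
    refine Finset.sum_congr rfl fun w _ => ?_
    simp
  rw [hgoal]
  calc 1 - (1 - α) ^ (ℓ + 1) = ∑ j ∈ Finset.range (ℓ + 1), α * (1 - α) ^ j :=
        (geom_aux α ℓ).symm
    _ = ∑ j ∈ Finset.range (ℓ + 1), α * φ (t ^ j) := by
        refine Finset.sum_congr rfl fun j hj => ?_
        exact (hterm_eq j (Nat.lt_succ_iff.mp (Finset.mem_range.mp hj))).symm
    _ ≤ α * φ (Ring.inverse (1 - t)) :=
        sum_le_hasSum _ (fun j _ => hterm_nonneg j) hφsum
end

section
/- Let P be an n×n row-stochastic matrix, α ∈ (0,1), K ⊆ {1,…,n}, U the indicator of the complement of K, P̃(i,j) = U(i)P(i,j), and s with U(s) = 1. Define μ_s = e_sᵀ(I − (1−α)P̃)⁻¹ and π̃_s = α·e_sᵀ·(I − (1−α)(P̃ + e_K e_sᵀ))⁻¹, where e_K is the indicator column vector of K. Then for every v, π̃_s(v) = α·μ_s(v) / (1 − (1−α)·μ_s(K)), where μ_s(K) = ∑_{k∈K} μ_s(k). -/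
open Matrix

lemma aux_isUnit_det {n : ℕ} (M : Matrix (Fin n) (Fin n) ℝ)
    (h0 : ∀ i j, 0 ≤ M i j) (h1 : ∀ i, ∑ j, M i j ≤ 1)
    (β : ℝ) (hβ0 : 0 ≤ β) (hβ1 : β < 1) :
    IsUnit (1 - β • M).det := by
  refine (Ne.isUnit (det_ne_zero_of_sum_row_lt_diag ?_))
  intro k
  have hMk : M k k ≤ 1 := by
    calc M k k ≤ ∑ j, M k j := Finset.single_le_sum (fun j _ => h0 k j) (Finset.mem_univ k)
    _ ≤ 1 := h1 k
  have hoff : ∀ j ∈ Finset.univ.erase k, ‖(1 - β • M : Matrix (Fin n) (Fin n) ℝ) k j‖ = β * M k j := by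
    intro j hj
    have hjk : j ≠ k := (Finset.mem_erase.mp hj).1
    simp only [Matrix.sub_apply, Matrix.one_apply, Matrix.smul_apply, smul_eq_mul,
      if_neg (Ne.symm hjk), zero_sub, Real.norm_eq_abs, abs_neg, abs_mul]
    rw [abs_of_nonneg hβ0, abs_of_nonneg (h0 k j)]
  rw [Finset.sum_congr rfl hoff]
  have hdiag : (1 - β • M : Matrix (Fin n) (Fin n) ℝ) k k = 1 - β * M k k := by
    simp [Matrix.sub_apply, Matrix.one_apply, Matrix.smul_apply]
  have hpos : 0 < 1 - β * M k k := by nlinarith [h0 k k]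
  rw [hdiag, Real.norm_eq_abs, abs_of_pos hpos]
  have hsum : ∑ j ∈ Finset.univ.erase k, M k j = (∑ j, M k j) - M k k :=
    Finset.sum_erase_eq_sub (Finset.mem_univ k)
  rw [← Finset.mul_sum, hsum]
  nlinarith [h1 k]

/-- Sherman–Morrison relation between π̃_s and μ_s:
π̃_s(v) = α μ_s(v) / (1 − (1−α) μ_s(K)). -/
theorem stmt6 {n : ℕ} (P : Matrix (Fin n) (Fin n) ℝ)
    (hP0 : ∀ i j, 0 ≤ P i j) (hP1 : ∀ i, ∑ j, P i j = 1)
    (α : ℝ) (hα0 : 0 < α) (hα1 : α < 1)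
    (K : Finset (Fin n)) (s : Fin n) (hs : s ∉ K)
    (U : Fin n → ℝ) (hUdef : ∀ i, U i = if i ∈ K then 0 else 1)
    (Pt : Matrix (Fin n) (Fin n) ℝ) (hPt : Pt = Matrix.of fun i j => U i * P i j)
    (eK : Fin n → ℝ) (heK : eK = fun i => if i ∈ K then 1 else 0)
    (μ : Fin n → ℝ)
    (hμ : μ = (Pi.single s 1 : Fin n → ℝ) ᵥ* (1 - (1 - α) • Pt)⁻¹)
    (πt : Fin n → ℝ)
    (hπt : πt = α • ((Pi.single s 1 : Fin n → ℝ) ᵥ*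
      (1 - (1 - α) • (Pt + vecMulVec eK (Pi.single s 1)))⁻¹)) :
    ∀ v, πt v = α * μ v / (1 - (1 - α) * ∑ k ∈ K, μ k) := by
  set es : Fin n → ℝ := Pi.single s 1 with hes
  set A : Matrix (Fin n) (Fin n) ℝ := 1 - (1 - α) • Pt with hA
  set V : Matrix (Fin n) (Fin n) ℝ := vecMulVec eK es with hV
  set B : Matrix (Fin n) (Fin n) ℝ := 1 - (1 - α) • (Pt + V) with hB
  have hβ0 : (0:ℝ) ≤ 1 - α := by linarith
  have hβ1 : (1:ℝ) - α < 1 := by linarith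
  -- basic facts about Pt
  have hPt0 : ∀ i j, 0 ≤ Pt i j := by
    intro i j; rw [hPt]; simp only [Matrix.of_apply]; rw [hUdef]
    by_cases h : i ∈ K <;> simp [h, hP0 i j]
  have hPt1 : ∀ i, ∑ j, Pt i j ≤ 1 := by
    intro i; rw [hPt]; simp only [Matrix.of_apply]
    rw [← Finset.mul_sum, hP1 i, mul_one, hUdef]
    by_cases h : i ∈ K <;> simp [h]
  -- invertibility of A
  have hAdet : IsUnit A.det := aux_isUnit_det Pt hPt0 hPt1 _ hβ0 hβ1
  -- facts about M2 = Pt + V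
  have hV0 : ∀ i j, 0 ≤ V i j := by
    intro i j; rw [hV]
    simp only [vecMulVec_apply, heK, hes]
    by_cases h : i ∈ K <;> by_cases hjs : j = s <;>
      simp [h, hjs, Pi.single_apply]
  have hM20 : ∀ i j, 0 ≤ (Pt + V) i j := fun i j =>
    add_nonneg (hPt0 i j) (hV0 i j)
  have hM21 : ∀ i, ∑ j, (Pt + V) i j ≤ 1 := by
    intro i
    simp only [Matrix.add_apply, Finset.sum_add_distrib]
    have hVsum : ∑ j, V i j = eK i := by
      rw [hV]
      simp only [vecMulVec_apply, hes]
      rw [← Finset.mul_sum]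
      simp [Finset.sum_pi_single]
    rw [hVsum]
    have hPtsum : ∑ j, Pt i j = U i := by
      rw [hPt]; simp only [Matrix.of_apply]; rw [← Finset.mul_sum, hP1 i, mul_one]
    rw [hPtsum, hUdef, heK]
    by_cases h : i ∈ K <;> simp [h]
  have hBdet : IsUnit B.det := aux_isUnit_det (Pt + V) hM20 hM21 _ hβ0 hβ1
  -- μ ᵥ* A = es
  have hμA : μ ᵥ* A = es := by
    rw [hμ, Matrix.vecMul_vecMul, Matrix.nonsing_inv_mul A hAdet, Matrix.vecMul_one]
  -- μ ᵥ* V = m • es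
  set m : ℝ := ∑ k ∈ K, μ k with hm
  have hμV : μ ᵥ* V = m • es := by
    funext j
    rw [hV]
    simp only [Matrix.vecMul, dotProduct, vecMulVec_apply, Pi.smul_apply,
      smul_eq_mul]
    simp_rw [← mul_assoc]
    rw [← Finset.sum_mul, hm]
    congr 1
    rw [heK]
    simp only [mul_ite, mul_one, mul_zero]
    rw [Finset.sum_ite_mem]
    simp
  -- μ ᵥ* B = d • es
  set d : ℝ := 1 - (1 - α) * m with hd
  have hBAV : B = A - (1 - α) • V := by
    rw [hB, hA, smul_add]; ring_nf; abel
  have hsmulM : ∀ (c : ℝ) (M : Matrix (Fin n) (Fin n) ℝ) (x : Fin n → ℝ),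
      x ᵥ* (c • M) = c • (x ᵥ* M) := by
    intro c M x
    funext j
    simp [Matrix.vecMul, dotProduct, Finset.mul_sum, Matrix.smul_apply]
    apply Finset.sum_congr rfl
    intro i _
    ring
  have hμB : μ ᵥ* B = d • es := by
    rw [hBAV, Matrix.vecMul_sub, hμA, hsmulM, hμV, smul_smul, hd, sub_smul, one_smul]
  -- d ≠ 0
  have hdne : d ≠ 0 := by
    intro h0
    have : μ = 0 := by
      have h1 : μ ᵥ* B = 0 := by rw [hμB, h0, zero_smul]
      have h2 : μ ᵥ* B ᵥ* B⁻¹ = μ := by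
        rw [Matrix.vecMul_vecMul, Matrix.mul_nonsing_inv B hBdet, Matrix.vecMul_one]
      rw [h1] at h2
      rw [← h2, Matrix.zero_vecMul]
    rw [this, Matrix.zero_vecMul] at hμA
    have := congrFun hμA s
    simp [hes, Pi.single_apply] at this
  -- (d⁻¹ • μ) ᵥ* B = es, hence es ᵥ* B⁻¹ = d⁻¹ • μ
  have hkey : es ᵥ* B⁻¹ = d⁻¹ • μ := by
    have h1 : (d⁻¹ • μ) ᵥ* B = es := by
      rw [Matrix.smul_vecMul, hμB, smul_smul, inv_mul_cancel₀ hdne, one_smul]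
    calc es ᵥ* B⁻¹ = ((d⁻¹ • μ) ᵥ* B) ᵥ* B⁻¹ := by rw [h1]
      _ = (d⁻¹ • μ) ᵥ* (B * B⁻¹) := Matrix.vecMul_vecMul _ _ _
      _ = d⁻¹ • μ := by rw [Matrix.mul_nonsing_inv B hBdet, Matrix.vecMul_one]
  intro v
  rw [hπt]
  simp only [← hes, ← hB, hkey, Pi.smul_apply, smul_eq_mul]
  rw [hd, hm]
  field_simp
end

section
/- Under the setup above (P row stochastic, α ∈ (0,1), K ⊆ {1,…,n}, U indicator of the complement of K, P̃(i,j) = U(i)P(i,j), U(s) = 1, π̃_s = α·e_sᵀ(I − (1−α)(P̃ + e_K e_sᵀ))⁻¹), one has π̃_s(s) ≥ α + (1−α)·π̃_s(K), where π̃_s(K) = ∑_{k∈K} π̃_s(k). -/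
/-!
With `M = P̃ + e_K e_sᵀ`, which is row stochastic, `(1 - α) • M` has ∞-operator norm `< 1`.
The Neumann series for `(1 - (1 - α) • M)⁻¹` then shows that `π̃_s` is entrywise nonnegative,
and `π̃_s = α e_s + (1 - α) π̃_s M`. Evaluated at `s`, this gives the claim, because the column
`M (·, s) = P̃ (·, s) + e_K` dominates the indicator of `K`.
-/

open Matrix

namespace Matrix

variable {n : Type*} [Fintype n] [DecidableEq n]

section LinftyOpNorm

attribute [local instance] Matrix.linftyOpNormedRing Matrix.linftyOpNormedAlgebra

lemma linfty_opNorm_le_one_of_mem_rowStochastic {M : Matrix n n ℝ}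
    (hM : M ∈ rowStochastic ℝ n) : ‖M‖ ≤ 1 := by
  rw [linfty_opNorm_def, ← NNReal.coe_one, NNReal.coe_le_coe]
  refine Finset.sup_le fun i _ => ?_
  rw [← NNReal.coe_le_coe]
  push_cast
  simp_rw [Real.norm_of_nonneg (nonneg_of_mem_rowStochastic hM), sum_row_of_mem_rowStochastic hM]
  rfl

lemma inv_one_sub_apply_nonneg {B : Matrix n n ℝ} (hB0 : ∀ i j, 0 ≤ B i j) (hB : ‖B‖ < 1)
    (i j : n) : 0 ≤ (1 - B)⁻¹ i j := by
  have hsum := hasSum_geom_series_inverse B hB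
  rw [← nonsing_inv_eq_ringInverse] at hsum
  exact ((Pi.hasSum.mp (Pi.hasSum.mp hsum i)) j).nonneg fun k => pow_apply_nonneg hB0 k i j

variable {M : Matrix n n ℝ} {c : ℝ}

lemma norm_smul_lt_one_of_mem_rowStochastic (hM : M ∈ rowStochastic ℝ n) (hc0 : 0 ≤ c)
    (hc1 : c < 1) : ‖c • M‖ < 1 :=
  calc ‖c • M‖ ≤ ‖c‖ * ‖M‖ := norm_smul_le c M
    _ ≤ c * 1 := by
      rw [Real.norm_of_nonneg hc0]
      exact mul_le_mul_of_nonneg_left (linfty_opNorm_le_one_of_mem_rowStochastic hM) hc0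
    _ < 1 := by linarith

lemma isUnit_det_one_sub_smul_of_mem_rowStochastic (hM : M ∈ rowStochastic ℝ n) (hc0 : 0 ≤ c)
    (hc1 : c < 1) : IsUnit (1 - c • M).det :=
  (isUnit_iff_isUnit_det _).mp
    (isUnit_one_sub_of_norm_lt_one (norm_smul_lt_one_of_mem_rowStochastic hM hc0 hc1))

lemma inv_one_sub_smul_apply_nonneg_of_mem_rowStochastic (hM : M ∈ rowStochastic ℝ n)
    (hc0 : 0 ≤ c) (hc1 : c < 1) (i j : n) :
    0 ≤ (1 - c • M)⁻¹ i j :=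
  inv_one_sub_apply_nonneg (fun _ _ => mul_nonneg hc0 (nonneg_of_mem_rowStochastic hM))
    (norm_smul_lt_one_of_mem_rowStochastic hM hc0 hc1) i j

end LinftyOpNorm

section Resolvent

variable {R : Type*} [CommRing R]

lemma vecMul_inv_one_sub_smul {M : Matrix n n R} {c : R} (h : IsUnit (1 - c • M).det)
    (v : n → R) :
    v ᵥ* (1 - c • M)⁻¹ = v + c • ((v ᵥ* (1 - c • M)⁻¹) ᵥ* M) := by
  set w := v ᵥ* (1 - c • M)⁻¹
  have hw : w ᵥ* (1 - c • M) = v := by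
    rw [vecMul_vecMul, nonsing_inv_mul _ h, vecMul_one]
  rw [vecMul_sub, vecMul_one, vecMul_smul] at hw
  rw [← hw, sub_add_cancel]

end Resolvent

/-- `P̃ + e_K e_sᵀ`: the rows of `P` indexed by `K` are replaced by a jump to `s`. -/
def redirectRows (P : Matrix n n ℝ) (K : Finset n) (s : n) : Matrix n n ℝ :=
  of (fun i j => (if i ∈ K then 0 else 1) * P i j) +
    vecMulVec (fun i => if i ∈ K then 1 else 0) (Pi.single s 1)

variable {P : Matrix n n ℝ} {K : Finset n} {s : n}

lemma redirectRows_mem_rowStochastic (hP : P ∈ rowStochastic ℝ n) :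
    redirectRows P K s ∈ rowStochastic ℝ n := by
  rw [mem_rowStochastic_iff_sum]
  constructor
  · intro i j
    simp only [redirectRows, add_apply, of_apply, vecMulVec_apply]
    refine add_nonneg (mul_nonneg ?_ (nonneg_of_mem_rowStochastic hP))
      (mul_nonneg ?_ ((Pi.single_nonneg.2 zero_le_one : (0 : n → ℝ) ≤ _) j)) <;>
      split_ifs <;> norm_num
  · intro i
    by_cases hi : i ∈ K <;>
      simp [redirectRows, vecMulVec_apply, hi, sum_row_of_mem_rowStochastic hP]

lemma sum_le_vecMul_redirectRows_apply (hP0 : ∀ i j, 0 ≤ P i j) {v : n → ℝ} (hv : 0 ≤ v) :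
    ∑ k ∈ K, v k ≤ (v ᵥ* redirectRows P K s) s := by
  have hcol : ∀ i, redirectRows P K s i s =
      (if i ∈ K then 0 else 1) * P i s + if i ∈ K then 1 else 0 := by
    intro i
    simp [redirectRows, vecMulVec_apply]
  simp only [vecMul, dotProduct, hcol, mul_add, Finset.sum_add_distrib, mul_ite, mul_one,
    mul_zero, Finset.sum_ite_mem, Finset.univ_inter]
  refine le_add_of_nonneg_left (Finset.sum_nonneg fun i _ => ?_)
  exact mul_nonneg (hv i) (mul_nonneg (by split_ifs <;> norm_num) (hP0 i s))

end Matrix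

open Matrix

theorem stmt7_general {n : ℕ} (P : Matrix (Fin n) (Fin n) ℝ)
    (hP0 : ∀ i j, 0 ≤ P i j) (hP1 : ∀ i, ∑ j, P i j = 1)
    (α : ℝ) (hα0 : 0 < α) (hα1 : α < 1)
    (K : Finset (Fin n)) (s : Fin n)
    (U : Fin n → ℝ) (hUdef : ∀ i, U i = if i ∈ K then 0 else 1)
    (Pt : Matrix (Fin n) (Fin n) ℝ) (hPt : Pt = Matrix.of fun i j => U i * P i j)
    (eK : Fin n → ℝ) (heK : eK = fun i => if i ∈ K then 1 else 0)
    (πt : Fin n → ℝ)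
    (hπt : πt = α • ((Pi.single s 1 : Fin n → ℝ) ᵥ*
      (1 - (1 - α) • (Pt + vecMulVec eK (Pi.single s 1)))⁻¹)) :
    πt s ≥ α + (1 - α) * ∑ k ∈ K, πt k := by
  obtain rfl : U = fun i => if i ∈ K then 0 else 1 := funext hUdef
  subst hPt heK
  change πt = α • (Pi.single s 1 ᵥ* (1 - (1 - α) • redirectRows P K s)⁻¹) at hπt
  have hM := redirectRows_mem_rowStochastic (K := K) (s := s)
    (mem_rowStochastic_iff_sum.2 ⟨hP0, hP1⟩)
  have hc0 : 0 ≤ 1 - α := by linarith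
  have hc1 : 1 - α < 1 := by linarith
  have hπt_nonneg : 0 ≤ πt := fun j => by
    rw [hπt, single_one_vecMul]
    exact mul_nonneg hα0.le (inv_one_sub_smul_apply_nonneg_of_mem_rowStochastic hM hc0 hc1 s j)
  have hπt_eq : πt = α • Pi.single s 1 + (1 - α) • (πt ᵥ* redirectRows P K s) := by
    rw [hπt, smul_vecMul]
    nth_rw 1 [vecMul_inv_one_sub_smul (isUnit_det_one_sub_smul_of_mem_rowStochastic hM hc0 hc1)]
    module
  calc πt s = α + (1 - α) * (πt ᵥ* redirectRows P K s) s := by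
        nth_rw 1 [hπt_eq]; simp
    _ ≥ α + (1 - α) * ∑ k ∈ K, πt k := by
        gcongr; exact sum_le_vecMul_redirectRows_apply hP0 hπt_nonneg

/-- π̃_s(s) ≥ α + (1−α) π̃_s(K). -/
theorem stmt7 {n : ℕ} (P : Matrix (Fin n) (Fin n) ℝ)
    (hP0 : ∀ i j, 0 ≤ P i j) (hP1 : ∀ i, ∑ j, P i j = 1)
    (α : ℝ) (hα0 : 0 < α) (hα1 : α < 1)
    (K : Finset (Fin n)) (s : Fin n) (hs : s ∉ K)
    (U : Fin n → ℝ) (hUdef : ∀ i, U i = if i ∈ K then 0 else 1)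
    (Pt : Matrix (Fin n) (Fin n) ℝ) (hPt : Pt = Matrix.of fun i j => U i * P i j)
    (eK : Fin n → ℝ) (heK : eK = fun i => if i ∈ K then 1 else 0)
    (πt : Fin n → ℝ)
    (hπt : πt = α • ((Pi.single s 1 : Fin n → ℝ) ᵥ*
      (1 - (1 - α) • (Pt + vecMulVec eK (Pi.single s 1)))⁻¹)) :
    πt s ≥ α + (1 - α) * ∑ k ∈ K, πt k :=
  stmt7_general P hP0 hP1 α hα0 hα1 K s U hUdef Pt hPt eK heK πt hπt
end

section
/- With the notation of the previous statement, and defining μ_s^{(m)} = e_sᵀ ∑_{j=0}^m (1−α)^j P̃^j and writing W = complement of K in {1,…,n}, for every m ≥ 1 one has ‖π_s − (α e_sᵀ + ∑_{k∈K} β_s(k)π_k)‖₁ ≤ α·(μ_s^{(m−1)}(W) − 1) + (1−α)^m·e_sᵀ P̃^m e_W. -/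
open Matrix Finset

/-!
Put `μ = D⁻¹ π̃_s` with `D = α + (1 - α) π̃_s(K)`. The matrix `P̃ + e_K e_sᵀ` is row-stochastic, so
the resolvent defining `π̃_s` is a Neumann series with nonnegative entries, and the rank-one
(Sherman–Morrison) identity turns its defining equation into `μ = e_s + (1 - α) μ P̃`; thus `μ` is
the limit of the `μ_s^{(m)}` and `μ ≥ e_s`. By the Hubs identity the error vector is
`α (U μ - e_s) ≥ 0`, so the ℓ¹ error is exactly `α (μ(W) - 1)`. Unrolling the equation for `μ`
`m` times splits `μ(W)` into `μ_s^{(m-1)}(W)` plus the tail `(1 - α)^m x(W)`, `x = μ P̃^m`; as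
`P̃` has row sums `≤ 1` and vanishes on the rows in `K`, `x = e_s P̃^m + (1 - α) x P̃` gives
`α x(W) ≤ (e_s P̃^m)(W)`.
-/

namespace Matrix

variable {ι : Type*} [Fintype ι]

lemma vecMul_apply_nonneg {n R : Type*} [Semiring R] [PartialOrder R] [IsOrderedRing R]
    {x : ι → R} {A : Matrix ι n R} (hx : ∀ i, 0 ≤ x i) (hA : ∀ i j, 0 ≤ A i j) (j : n) :
    0 ≤ (x ᵥ* A) j :=
  dotProduct_nonneg_of_nonneg hx fun i => hA i j

variable [DecidableEq ι]

section Substochastic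

variable {A : Matrix ι ι ℝ} {K : Finset ι}

lemma sum_compl_vecMul_le {x : ι → ℝ} (hx : ∀ i, 0 ≤ x i) (hA0 : ∀ i j, 0 ≤ A i j)
    (hAK : ∀ i ∈ K, ∀ j, A i j = 0) (hA1 : ∀ i ∉ K, ∑ j, A i j ≤ 1) :
    ∑ w ∈ Kᶜ, (x ᵥ* A) w ≤ ∑ w ∈ Kᶜ, x w :=
  calc ∑ w ∈ Kᶜ, (x ᵥ* A) w ≤ ∑ w, (x ᵥ* A) w :=
        sum_le_sum_of_subset_of_nonneg (subset_univ _) fun j _ _ => vecMul_apply_nonneg hx hA0 j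
    _ = ∑ i ∈ Kᶜ, x i * ∑ j, A i j := by
        rw [sum_subset (subset_univ Kᶜ) fun i _ hi => by simp [hAK i (by simpa using hi)]]
        simp only [vecMul, dotProduct, mul_sum]
        exact sum_comm
    _ ≤ ∑ i ∈ Kᶜ, x i :=
        sum_le_sum fun i hi => mul_le_of_le_one_right (hx i) (hA1 i (mem_compl.1 hi))

lemma add_vecMulVec_mem_rowStochastic {v : ι → ℝ} (hA0 : ∀ i j, 0 ≤ A i j)
    (hAK : ∀ i ∈ K, ∀ j, A i j = 0) (hA1 : ∀ i ∉ K, ∑ j, A i j = 1) (hv0 : ∀ j, 0 ≤ v j)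
    (hv1 : ∑ j, v j = 1) :
    A + vecMulVec (fun i => if i ∈ K then 1 else 0) v ∈ rowStochastic ℝ ι := by
  refine mem_rowStochastic_iff_sum.2 ⟨fun i j => add_nonneg (hA0 i j) ?_, fun i => ?_⟩
  · simp only [vecMulVec_apply]
    split_ifs <;> simp [hv0 j]
  · by_cases hi : i ∈ K <;> simp [vecMulVec_apply, hi, hAK, hA1, hv1]

end Substochastic

section Resolvent

attribute [local instance] Matrix.linftyOpNormedRing Matrix.linftyOpNormedAlgebra

variable {M : Matrix ι ι ℝ} {c : ℝ}

lemma linfty_opNorm_smul_lt_one (hM : M ∈ rowStochastic ℝ ι) (hc0 : 0 ≤ c) (hc1 : c < 1) :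
    ‖c • M‖ < 1 := by
  have hM1 : ‖M‖₊ ≤ 1 := by
    rw [linfty_opNNNorm_def]
    refine Finset.sup_le fun i _ => ?_
    rw [← NNReal.coe_le_coe, NNReal.coe_sum]
    simp only [coe_nnnorm, Real.norm_of_nonneg (hM.1 i _), NNReal.coe_one]
    exact ((mem_rowStochastic_iff_sum.1 hM).2 i).le
  calc ‖c • M‖ ≤ ‖c‖ * ‖M‖ := norm_smul_le c M
    _ ≤ c * 1 := by rw [Real.norm_of_nonneg hc0]; gcongr; exact_mod_cast hM1
    _ < 1 := by linarith

lemma isUnit_one_sub_smul_of_mem_rowStochastic (hM : M ∈ rowStochastic ℝ ι) (hc0 : 0 ≤ c)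
    (hc1 : c < 1) : IsUnit (1 - c • M) :=
  isUnit_one_sub_of_norm_lt_one (linfty_opNorm_smul_lt_one hM hc0 hc1)

lemma inv_one_sub_smul_apply_nonneg (hM : M ∈ rowStochastic ℝ ι) (hc0 : 0 ≤ c) (hc1 : c < 1)
    (i j : ι) : 0 ≤ (1 - c • M)⁻¹ i j := by
  have hsum := hasSum_geom_series_inverse (c • M) (linfty_opNorm_smul_lt_one hM hc0 hc1)
  rw [nonsing_inv_eq_ringInverse]
  exact (Pi.hasSum.1 (Pi.hasSum.1 hsum i) j).nonneg
    fun k => pow_apply_nonneg (fun i j => mul_nonneg hc0 (hM.1 i j)) k i j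

end Resolvent

section Algebra

variable {R : Type*}

lemma inv_smul_eq_add_smul_vecMul_of_eq_smul_vecMul_inv [Field R] {A : Matrix ι ι R}
    {u v x : ι → R} {a c : R} (hunit : IsUnit (1 - c • (A + vecMulVec u v)).det)
    (hD : a + c * (x ⬝ᵥ u) ≠ 0) (hx : x = a • (v ᵥ* (1 - c • (A + vecMulVec u v))⁻¹)) :
    (a + c * (x ⬝ᵥ u))⁻¹ • x = v + c • (((a + c * (x ⬝ᵥ u))⁻¹ • x) ᵥ* A) := by
  have hres : x ᵥ* (1 - c • (A + vecMulVec u v)) = a • v := by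
    rw [hx, smul_vecMul, vecMul_vecMul, nonsing_inv_mul _ hunit, vecMul_one]
  rw [vecMul_sub, vecMul_one, vecMul_smul, vecMul_add, vecMul_vecMulVec,
    sub_eq_iff_eq_add] at hres
  rw [smul_vecMul, smul_comm, inv_smul_eq_iff₀ hD, smul_add, smul_inv_smul₀ hD]
  conv_lhs => rw [hres]
  module

variable [CommSemiring R] {A : Matrix ι ι R} {μ v : ι → R} {c : R}

lemma eq_vecMul_geom_sum_add_of_eq_add_smul_vecMul (h : μ = v + c • (μ ᵥ* A)) (m : ℕ) :
    μ = v ᵥ* ∑ j ∈ range m, c ^ j • A ^ j + c ^ m • (μ ᵥ* A ^ m) := by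
  induction m with
  | zero => simp
  | succ m ih =>
    conv_lhs => rw [ih]
    conv_lhs => rw [h]
    rw [sum_range_succ, vecMul_add, add_vecMul, smul_vecMul, vecMul_vecMul, ← pow_succ',
      vecMul_smul, smul_add, smul_smul, ← pow_succ, add_assoc]

lemma vecMul_pow_eq_add_smul_vecMul (h : μ = v + c • (μ ᵥ* A)) (m : ℕ) :
    μ ᵥ* A ^ m = v ᵥ* A ^ m + c • ((μ ᵥ* A ^ m) ᵥ* A) := by
  conv_lhs => rw [h]
  rw [add_vecMul, smul_vecMul, vecMul_vecMul, vecMul_vecMul, ← pow_succ, ← pow_succ']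

end Algebra

lemma one_sub_mul_sum_compl_le {A : Matrix ι ι ℝ} {K : Finset ι} {μ v : ι → ℝ} {c : ℝ}
    (hc : 0 ≤ c) (hμ0 : ∀ i, 0 ≤ μ i) (hA0 : ∀ i j, 0 ≤ A i j)
    (hAK : ∀ i ∈ K, ∀ j, A i j = 0) (hA1 : ∀ i ∉ K, ∑ j, A i j ≤ 1)
    (h : μ = v + c • (μ ᵥ* A)) (m : ℕ) :
    (1 - c) * ∑ w ∈ Kᶜ, μ w ≤ (1 - c) * ∑ w ∈ Kᶜ, (v ᵥ* ∑ j ∈ range m, c ^ j • A ^ j) w +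
      c ^ m * ∑ w ∈ Kᶜ, (v ᵥ* A ^ m) w := by
  set x := μ ᵥ* A ^ m
  have htail : (1 - c) * ∑ w ∈ Kᶜ, x w ≤ ∑ w ∈ Kᶜ, (v ᵥ* A ^ m) w := by
    have hx := congr_arg (fun y => ∑ w ∈ Kᶜ, y w) (vecMul_pow_eq_add_smul_vecMul h m)
    simp only [Pi.add_apply, Pi.smul_apply, smul_eq_mul, sum_add_distrib, ← mul_sum] at hx
    have hxA := sum_compl_vecMul_le (vecMul_apply_nonneg hμ0 (pow_apply_nonneg hA0 m)) hA0 hAK hA1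
    nlinarith
  have hsplit : ∑ w ∈ Kᶜ, μ w =
      ∑ w ∈ Kᶜ, (v ᵥ* ∑ j ∈ range m, c ^ j • A ^ j) w + c ^ m * ∑ w ∈ Kᶜ, x w := by
    conv_lhs => rw [eq_vecMul_geom_sum_add_of_eq_add_smul_vecMul h m]
    simp only [Pi.add_apply, Pi.smul_apply, smul_eq_mul, sum_add_distrib, ← mul_sum, x]
  rw [hsplit]
  nlinarith [mul_le_mul_of_nonneg_left htail (pow_nonneg hc m)]

end Matrix

lemma sum_abs_indicator_mul_sub_single {ι : Type*} [Fintype ι] [DecidableEq ι] {μ : ι → ℝ}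
    {K : Finset ι} {s : ι} (hs : s ∉ K) (hμ : ∀ w, (Pi.single s 1 : ι → ℝ) w ≤ μ w) :
    ∑ w, |(if w ∈ K then 0 else 1) * μ w - (Pi.single s 1 : ι → ℝ) w| = ∑ w ∈ Kᶜ, μ w - 1 := by
  rw [← sum_add_sum_compl K, sum_eq_zero fun w hw => ?_, zero_add]
  · have hsingle : ∑ w ∈ Kᶜ, (Pi.single s 1 : ι → ℝ) w = 1 := by
      rw [sum_pi_single', if_pos (mem_compl.2 hs)]
    conv_rhs => rw [← hsingle, ← sum_sub_distrib]
    refine sum_congr rfl fun w hw => ?_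
    rw [if_neg (mem_compl.1 hw), one_mul, abs_of_nonneg (sub_nonneg.2 (hμ w))]
  · rw [if_pos hw, Pi.single_eq_of_ne (ne_of_mem_of_not_mem hw hs)]
    simp

theorem stmt9_general {n : ℕ} (P : Matrix (Fin n) (Fin n) ℝ)
    (hP0 : ∀ i j, 0 ≤ P i j) (hP1 : ∀ i, ∑ j, P i j = 1)
    (α : ℝ) (hα0 : 0 < α) (hα1 : α < 1)
    (K : Finset (Fin n)) (s : Fin n) (hs : s ∉ K)
    (U : Fin n → ℝ) (hUdef : ∀ i, U i = if i ∈ K then 0 else 1)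
    (Pt : Matrix (Fin n) (Fin n) ℝ) (hPt : Pt = Matrix.of fun i j => U i * P i j)
    (eK : Fin n → ℝ) (heK : eK = fun i => if i ∈ K then 1 else 0)
    (π : Fin n → Fin n → ℝ)
    (πt : Fin n → ℝ)
    (hπt : πt = α • ((Pi.single s 1 : Fin n → ℝ) ᵥ*
      (1 - (1 - α) • (Pt + vecMulVec eK (Pi.single s 1)))⁻¹))
    (β : Fin n → ℝ)
    (hβ : ∀ k, β k = πt k / (α + (1 - α) * ∑ k' ∈ K, πt k'))
    (hubs : ∀ v, π s v =
      (α * U v * πt v + ∑ k ∈ K, πt k * π k v) / (α + (1 - α) * ∑ k ∈ K, πt k))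
    (μm : ℕ → Fin n → ℝ)
    (hμm : ∀ m, μm m = (Pi.single s 1 : Fin n → ℝ) ᵥ*
      ∑ j ∈ Finset.range (m + 1), (1 - α) ^ j • Pt ^ j) :
    ∀ m, 1 ≤ m →
      ∑ w : Fin n, |π s w - (α * (Pi.single s 1 : Fin n → ℝ) w + ∑ k ∈ K, β k * π k w)| ≤
        α * ((∑ w ∈ Kᶜ, μm (m - 1) w) - 1) +
          (1 - α) ^ m * ∑ w ∈ Kᶜ, ((Pi.single s 1 : Fin n → ℝ) ᵥ* Pt ^ m) w := by
  intro m hm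
  obtain ⟨m, rfl⟩ := Nat.exists_eq_add_of_le' hm
  set e : Fin n → ℝ := Pi.single s 1
  have he0 : ∀ j, 0 ≤ e j := fun j => by simp only [e, Pi.single_apply]; positivity
  have hPt_apply : ∀ i j, Pt i j = if i ∈ K then 0 else P i j := by simp [hPt, hUdef]
  have hPt0 : ∀ i j, 0 ≤ Pt i j := fun i j => by rw [hPt_apply]; split_ifs <;> simp [hP0]
  have hPtK : ∀ i ∈ K, ∀ j, Pt i j = 0 := fun i hi j => by rw [hPt_apply, if_pos hi]
  have hPt1 : ∀ i ∉ K, ∑ j, Pt i j = 1 := fun i hi => by simp [hPt_apply, hi, hP1]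
  have hQ : Pt + vecMulVec eK e ∈ rowStochastic ℝ (Fin n) :=
    heK ▸ add_vecMulVec_mem_rowStochastic hPt0 hPtK hPt1 he0 (Fintype.sum_pi_single' s 1)
  have hc0 : 0 ≤ 1 - α := sub_nonneg.2 hα1.le
  have hc1 : 1 - α < 1 := sub_lt_self 1 hα0
  have hπt0 : ∀ v, 0 ≤ πt v := fun v => by
    rw [hπt]
    exact mul_nonneg hα0.le (vecMul_apply_nonneg he0 (inv_one_sub_smul_apply_nonneg hQ hc0 hc1) v)
  have hdot : πt ⬝ᵥ eK = ∑ k ∈ K, πt k := by simp [heK, dotProduct]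
  set D := α + (1 - α) * ∑ k ∈ K, πt k
  have hD : 0 < D := add_pos_of_pos_of_nonneg hα0 (mul_nonneg hc0 (sum_nonneg fun k _ => hπt0 k))
  set μ := D⁻¹ • πt
  have hμ : μ = e + (1 - α) • (μ ᵥ* Pt) := by
    have hunit := (isUnit_iff_isUnit_det _).1 (isUnit_one_sub_smul_of_mem_rowStochastic hQ hc0 hc1)
    simpa only [hdot] using
      inv_smul_eq_add_smul_vecMul_of_eq_smul_vecMul_inv hunit (hdot ▸ hD.ne') hπt
  have hμ0 : ∀ i, 0 ≤ μ i := fun i => mul_nonneg (inv_nonneg.2 hD.le) (hπt0 i)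
  have hμe : ∀ w, e w ≤ μ w := fun w => by
    rw [hμ]
    simpa using mul_nonneg hc0 (vecMul_apply_nonneg hμ0 hPt0 w)
  have herr : ∀ w, π s w - (α * e w + ∑ k ∈ K, β k * π k w) =
      α * ((if w ∈ K then 0 else 1) * μ w - e w) := fun w => by
    rw [hubs, ← hUdef]
    simp only [hβ, μ, Pi.smul_apply, smul_eq_mul, div_mul_eq_mul_div, ← sum_div]
    field_simp
    ring
  have hbound := one_sub_mul_sum_compl_le hc0 hμ0 hPt0 hPtK (fun i hi => (hPt1 i hi).le) hμ (m + 1)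
  simp_rw [herr, abs_mul, abs_of_pos hα0]
  rw [← mul_sum, sum_abs_indicator_mul_sub_single hs hμe, Nat.add_sub_cancel, hμm]
  linarith [sub_sub_cancel 1 α ▸ hbound]

/-- m-step neighborhood bound on the ℓ¹ estimation error:
‖π_s − (α e_sᵀ + ∑_k β_s(k) π_k)‖₁ ≤ α (μ_s^{(m−1)}(W) − 1) + (1−α)^m e_sᵀ P̃^m e_W. -/
theorem stmt9 {n : ℕ} (P : Matrix (Fin n) (Fin n) ℝ)
    (hP0 : ∀ i j, 0 ≤ P i j) (hP1 : ∀ i, ∑ j, P i j = 1)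
    (α : ℝ) (hα0 : 0 < α) (hα1 : α < 1)
    (K : Finset (Fin n)) (s : Fin n) (hs : s ∉ K)
    (U : Fin n → ℝ) (hUdef : ∀ i, U i = if i ∈ K then 0 else 1)
    (Pt : Matrix (Fin n) (Fin n) ℝ) (hPt : Pt = Matrix.of fun i j => U i * P i j)
    (eK : Fin n → ℝ) (heK : eK = fun i => if i ∈ K then 1 else 0)
    (π : Fin n → Fin n → ℝ)
    (hπ : ∀ v, π v = α • ((Pi.single v 1 : Fin n → ℝ) ᵥ* (1 - (1 - α) • P)⁻¹))
    (πt : Fin n → ℝ)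
    (hπt : πt = α • ((Pi.single s 1 : Fin n → ℝ) ᵥ*
      (1 - (1 - α) • (Pt + vecMulVec eK (Pi.single s 1)))⁻¹))
    (β : Fin n → ℝ)
    (hβ : ∀ k, β k = πt k / (α + (1 - α) * ∑ k' ∈ K, πt k'))
    (hubs : ∀ v, π s v =
      (α * U v * πt v + ∑ k ∈ K, πt k * π k v) / (α + (1 - α) * ∑ k ∈ K, πt k))
    (μm : ℕ → Fin n → ℝ)
    (hμm : ∀ m, μm m = (Pi.single s 1 : Fin n → ℝ) ᵥ*
      ∑ j ∈ Finset.range (m + 1), (1 - α) ^ j • Pt ^ j) :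
    ∀ m, 1 ≤ m →
      ∑ w : Fin n, |π s w - (α * (Pi.single s 1 : Fin n → ℝ) w + ∑ k ∈ K, β k * π k w)| ≤
        α * ((∑ w ∈ Kᶜ, μm (m - 1) w) - 1) +
          (1 - α) ^ m * ∑ w ∈ Kᶜ, ((Pi.single s 1 : Fin n → ℝ) ᵥ* Pt ^ m) w :=
  stmt9_general P hP0 hP1 α hα0 hα1 K s hs U hUdef Pt hPt eK heK π πt hπt β hβ hubs μm hμm
end

section
/- Let P be an n×n row-stochastic matrix, α ∈ (0,1), K ⊆ {1,…,n}, U the indicator of the complement W of K, P̃(i,j) = U(i)P(i,j), and s ∈ W. Let π̃_s and π_v be as before, define hat π_v = (∑_{k∈K} π̃_v(k)π_k)/(α + (1−α)π̃_v(K)), and assume the Hubs identity π_v(w) = (α U(w) π̃_v(w) + ∑_{k∈K} π̃_v(k)π_k(w))/(α + (1−α)π̃_v(K)). Then for every ε > 0: ‖π_v − (α e_vᵀ + hat π_v)‖₁ < ε if and only if π̃_v(K) > α(1 − (ε + α)) / (ε + α(2 − (ε + α))). -/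
open Matrix

attribute [local instance] Matrix.linftyOpNormedRing Matrix.linftyOpNormedAlgebra

private lemma stmt10_aux (α ε S D : ℝ) (hα0 : 0 < α) (hα1 : α < 1) (hε : 0 < ε)
    (hεα : ε + α < 1) (hS0 : 0 ≤ S) (hDdef : D = α + (1 - α) * S) :
    (α * (1 - S) / D - α < ε) ↔ S > α * (1 - (ε + α)) / (ε + α * (2 - (ε + α))) := by
  have hD : 0 < D := by nlinarith
  have hd : 0 < ε + α * (2 - (ε + α)) := by nlinarith
  rw [gt_iff_lt, div_lt_iff₀ hd, sub_lt_iff_lt_add, div_lt_iff₀ hD]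
  constructor
  · intro h; nlinarith
  · intro h; nlinarith

/-- The ℓ¹ estimation error is below ε iff π̃_v(K) exceeds the explicit threshold. -/
theorem stmt10 {n : ℕ} (P : Matrix (Fin n) (Fin n) ℝ)
    (hP0 : ∀ i j, 0 ≤ P i j) (hP1 : ∀ i, ∑ j, P i j = 1)
    (α : ℝ) (hα0 : 0 < α) (hα1 : α < 1)
    (K : Finset (Fin n)) (v : Fin n) (hv : v ∉ K)
    (U : Fin n → ℝ) (hUdef : ∀ i, U i = if i ∈ K then 0 else 1)
    (Pt : Matrix (Fin n) (Fin n) ℝ) (hPt : Pt = Matrix.of fun i j => U i * P i j)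
    (eK : Fin n → ℝ) (heK : eK = fun i => if i ∈ K then 1 else 0)
    (π : Fin n → Fin n → ℝ)
    (hπ : ∀ u, π u = α • ((Pi.single u 1 : Fin n → ℝ) ᵥ* (1 - (1 - α) • P)⁻¹))
    (πt : Fin n → ℝ)
    (hπt : πt = α • ((Pi.single v 1 : Fin n → ℝ) ᵥ*
      (1 - (1 - α) • (Pt + vecMulVec eK (Pi.single v 1)))⁻¹))
    (hatπ : Fin n → ℝ)
    (hhatπ : ∀ w, hatπ w = (∑ k ∈ K, πt k * π k w) / (α + (1 - α) * ∑ k ∈ K, πt k))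
    (hubs : ∀ w, π v w =
      (α * U w * πt w + ∑ k ∈ K, πt k * π k w) / (α + (1 - α) * ∑ k ∈ K, πt k))
    (ε : ℝ) (hε : 0 < ε) (hεα : ε + α < 1) :
    (∑ w : Fin n, |π v w - (α * (Pi.single v 1 : Fin n → ℝ) w + hatπ w)| < ε) ↔
      (∑ k ∈ K, πt k) > α * (1 - (ε + α)) / (ε + α * (2 - (ε + α))) := by
  classical
  set e : Fin n → ℝ := (Pi.single v 1 : Fin n → ℝ) with he
  set M : Matrix (Fin n) (Fin n) ℝ := Pt + vecMulVec eK e with hM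
  have he_apply : ∀ w, e w = if w = v then 1 else 0 := by
    intro w; simp [he, Pi.single_apply]
  have hesum : ∑ j, e j = 1 := by
    simp only [he_apply]
    simp
  have hM_apply : ∀ i j, M i j = U i * P i j + eK i * e j := by
    intro i j; simp [hM, hPt, vecMulVec_apply]
  have hM0 : ∀ i j, 0 ≤ M i j := by
    intro i j
    have := hP0 i j
    simp only [hM_apply, hUdef, heK, he_apply]
    split_ifs <;> simp_all <;> linarith
  have hM1 : ∀ i, ∑ j, M i j = 1 := by
    intro i
    simp only [hM_apply]
    rw [Finset.sum_add_distrib, ← Finset.mul_sum, ← Finset.mul_sum, hP1 i, hesum, hUdef, heK]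
    by_cases h : i ∈ K <;> simp [h]
  -- norm bound
  have hMnorm : ‖M‖ ≤ 1 := by
    rw [Matrix.linfty_opNorm_def]
    rw [show (1 : ℝ) = ((1 : NNReal) : ℝ) by simp, NNReal.coe_le_coe]
    apply Finset.sup_le
    intro i _
    rw [← NNReal.coe_le_coe]
    push_cast
    calc ∑ j, (‖M i j‖₊ : ℝ) = ∑ j, M i j := by
          refine Finset.sum_congr rfl fun j _ => ?_
          rw [coe_nnnorm, Real.norm_eq_abs, abs_of_nonneg (hM0 i j)]
      _ ≤ 1 := le_of_eq (hM1 i)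
  set T : Matrix (Fin n) (Fin n) ℝ := (1 - α) • M with hTdef
  have hT : ‖T‖ < 1 := by
    rw [hTdef, norm_smul, Real.norm_eq_abs, abs_of_nonneg (by linarith : (0:ℝ) ≤ 1 - α)]
    nlinarith [norm_nonneg M]
  have hu : (1 - T)⁻¹ = ∑' k : ℕ, T ^ k := (Matrix.coe_units_inv (Units.oneSub T hT)).symm
  have hsummable : Summable (fun k : ℕ => T ^ k) := summable_geometric_of_norm_lt_one hT
  have hentry : ∀ i j, (∑' k : ℕ, T ^ k) i j = ∑' k : ℕ, (T ^ k) i j := by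
    intro i j
    have hs : HasSum (fun k : ℕ => T ^ k) (∑' k : ℕ, T ^ k) := hsummable.hasSum
    let L : Matrix (Fin n) (Fin n) ℝ →ₗ[ℝ] ℝ :=
      { toFun := fun X => X i j, map_add' := fun X Y => rfl, map_smul' := fun c X => rfl }
    exact (hs.mapL (LinearMap.toContinuousLinearMap L)).tsum_eq.symm
  have hvecMul : ∀ (X : Matrix (Fin n) (Fin n) ℝ) (w : Fin n), (e ᵥ* X) w = X v w := by
    intro X w
    simp [he, Matrix.vecMul, dotProduct, Pi.single_apply, ite_mul]
  have hπt_apply : ∀ w, πt w = α * ∑' k : ℕ, (T ^ k) v w := by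
    intro w
    rw [hπt]
    simp only [Pi.smul_apply, smul_eq_mul]
    rw [hu, hvecMul, hentry]
  -- nonnegativity
  have hMpow0 : ∀ (k : ℕ) (i j : Fin n), 0 ≤ (M ^ k) i j := by
    intro k
    induction k with
    | zero =>
      intro i j
      rw [pow_zero, Matrix.one_apply]
      split_ifs <;> norm_num
    | succ k ih =>
      intro i j
      rw [pow_succ, Matrix.mul_apply]
      exact Finset.sum_nonneg fun l _ => mul_nonneg (ih i l) (hM0 l j)
  have hTpow0 : ∀ (k : ℕ) (i j : Fin n), 0 ≤ (T ^ k) i j := by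
    intro k i j
    rw [hTdef, smul_pow]
    simp only [Matrix.smul_apply, smul_eq_mul]
    exact mul_nonneg (pow_nonneg (by linarith) k) (hMpow0 k i j)
  have hπt0 : ∀ w, 0 ≤ πt w := by
    intro w
    rw [hπt_apply]
    exact mul_nonneg hα0.le (tsum_nonneg fun k => hTpow0 k v w)
  -- fixed point equation
  have hA : πt ᵥ* (1 - T) = α • e := by
    rw [hπt, Matrix.smul_vecMul, Matrix.vecMul_vecMul]
    have hinv : (1 - T)⁻¹ * (1 - T) = 1 := by
      have h := (Units.oneSub T hT).inv_mul
      rwa [Matrix.coe_units_inv] at h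
    rw [hinv, Matrix.vecMul_one]
  have hfix : ∀ j, πt j = α * e j + (1 - α) * ∑ i, πt i * M i j := by
    intro j
    have h := congrFun hA j
    have lhs : (πt ᵥ* (1 - T)) j = πt j - (1 - α) * ∑ i, πt i * M i j := by
      simp only [Matrix.vecMul, dotProduct, Matrix.sub_apply, Matrix.one_apply, hTdef,
        Matrix.smul_apply, smul_eq_mul, mul_sub, Finset.sum_sub_distrib]
      congr 1
      · simp [Finset.sum_ite_eq', mul_ite]
      · rw [Finset.mul_sum]
        exact Finset.sum_congr rfl fun i _ => by ring
    rw [lhs] at h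
    have : (α • e) j = α * e j := rfl
    rw [this] at h
    linarith
  -- total sum is 1
  have hsumtot : ∑ j, πt j = 1 := by
    have e1 : ∑ j, πt j = α + (1 - α) * ∑ j, πt j := by
      calc ∑ j, πt j = ∑ j, (α * e j + (1 - α) * ∑ i, πt i * M i j) :=
            Finset.sum_congr rfl fun j _ => hfix j
        _ = α * (∑ j, e j) + (1 - α) * ∑ j, ∑ i, πt i * M i j := by
            rw [Finset.sum_add_distrib, ← Finset.mul_sum, ← Finset.mul_sum]
        _ = α + (1 - α) * ∑ j, πt j := by
            have hswap : ∀ i, ∑ j : Fin n, πt i * M i j = πt i := by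
              intro i; rw [← Finset.mul_sum, hM1 i, mul_one]
            rw [hesum, mul_one, Finset.sum_comm,
              show (∑ i : Fin n, ∑ j : Fin n, πt i * M i j) = ∑ j, πt j from
                Finset.sum_congr rfl fun i _ => hswap i]
    nlinarith
  set S : ℝ := ∑ k ∈ K, πt k with hSdef
  have hS0 : 0 ≤ S := Finset.sum_nonneg fun k _ => hπt0 k
  set D : ℝ := α + (1 - α) * S with hDdef
  have hD : 0 < D := by
    have : 0 ≤ (1 - α) * S := mul_nonneg (by linarith) hS0
    rw [hDdef]; linarith
  -- πt v ≥ D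
  have hMkv : ∀ k ∈ K, M k v = 1 := by
    intro k hk
    rw [hM_apply, hUdef, heK, he_apply]
    simp [hk]
  have hπtv : D ≤ πt v := by
    have hev : e v = 1 := by rw [he_apply]; simp
    rw [hfix v, hev, mul_one]
    have h1 : S = ∑ k ∈ K, πt k * M k v := by
      rw [hSdef]
      exact Finset.sum_congr rfl fun k hk => by rw [hMkv k hk, mul_one]
    have h2 : ∑ k ∈ K, πt k * M k v ≤ ∑ i, πt i * M i v :=
      Finset.sum_le_sum_of_subset_of_nonneg (Finset.subset_univ K)
        (fun i _ _ => mul_nonneg (hπt0 i) (hM0 i v))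
    have h3 : S ≤ ∑ i, πt i * M i v := h1 ▸ h2
    have h4 := mul_le_mul_of_nonneg_left h3 (by linarith : (0:ℝ) ≤ 1 - α)
    rw [hDdef]; linarith
  -- pointwise error
  have hdiff : ∀ w, π v w - hatπ w = α * U w * πt w / D := by
    intro w
    rw [hubs w, hhatπ w, add_div]
    ring
  have hterm : ∀ w, |π v w - (α * e w + hatπ w)| = α * U w * πt w / D - α * e w := by
    intro w
    have h1 : π v w - (α * e w + hatπ w) = α * U w * πt w / D - α * e w := by
      have := hdiff w; linarith
    rw [h1, abs_of_nonneg]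
    by_cases hw : w = v
    · rw [hw]
      have hev : e v = 1 := by rw [he_apply]; simp
      have hUv : U v = 1 := by rw [hUdef, if_neg hv]
      rw [hev, hUv, mul_one, sub_nonneg, le_div_iff₀ hD]
      nlinarith [hπtv]
    · have hew : e w = 0 := by rw [he_apply, if_neg hw]
      have hU0 : 0 ≤ U w := by rw [hUdef]; split_ifs <;> norm_num
      rw [hew, mul_zero, sub_zero]
      exact div_nonneg (mul_nonneg (mul_nonneg hα0.le hU0) (hπt0 w)) hD.le
  -- the sum of U w * πt w
  have hWsum : ∑ w, U w * πt w = 1 - S := by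
    have hstep : ∀ w, U w * πt w = πt w - (if w ∈ K then πt w else 0) := by
      intro w; rw [hUdef]; split_ifs <;> ring
    rw [Finset.sum_congr rfl fun w _ => hstep w, Finset.sum_sub_distrib, hsumtot,
      Finset.sum_ite_mem, Finset.univ_inter, ← hSdef]
  -- total error
  have hEsum : ∑ w : Fin n, |π v w - (α * e w + hatπ w)| = α * (1 - S) / D - α := by
    rw [Finset.sum_congr rfl fun w _ => hterm w, Finset.sum_sub_distrib, ← Finset.mul_sum,
      hesum, mul_one]
    congr 1
    rw [← Finset.sum_div]
    congr 1
    rw [← hWsum, Finset.mul_sum]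
    exact Finset.sum_congr rfl fun w _ => by ring
  rw [hEsum]
  exact stmt10_aux α ε S D hα0 hα1 hε hεα hS0 hDdef
end

section
/- With the setup of the m-step error bound (P row stochastic, α ∈ (0,1), K ⊆ {1,…,n} with complement W, P̃(i,j) = U(i)P(i,j), v ∈ W, the Hubs identity holding, and x_v^{(i)} the power iteration), for every i ≥ 1 the ℓ¹ estimation error satisfies ‖π_v − (α e_vᵀ + ∑_{k∈K}β_v(k)π_k)‖₁ ≤ x_v^{(i)}(W) − α, and moreover x_v^{(i)}(W) − α ≤ 1 − α. -/
open Matrix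

set_option maxHeartbeats 1000000

/-- The power iteration gives a computable bound on the ℓ¹ estimation error:
‖π_v − (α e_vᵀ + ∑_k β_v(k) π_k)‖₁ ≤ x_v^{(i)}(W) − α ≤ 1 − α for all i ≥ 1. -/
theorem stmt13 {n : ℕ} (P : Matrix (Fin n) (Fin n) ℝ)
    (hP0 : ∀ i j, 0 ≤ P i j) (hP1 : ∀ i, ∑ j, P i j = 1)
    (α : ℝ) (hα0 : 0 < α) (hα1 : α < 1)
    (K : Finset (Fin n)) (v : Fin n) (hv : v ∉ K)
    (U : Fin n → ℝ) (hUdef : ∀ i, U i = if i ∈ K then 0 else 1)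
    (Pt : Matrix (Fin n) (Fin n) ℝ) (hPt : Pt = Matrix.of fun i j => U i * P i j)
    (eK : Fin n → ℝ) (heK : eK = fun i => if i ∈ K then 1 else 0)
    (π : Fin n → Fin n → ℝ)
    (hπ : ∀ u, π u = α • ((Pi.single u 1 : Fin n → ℝ) ᵥ* (1 - (1 - α) • P)⁻¹))
    (πt : Fin n → ℝ)
    (hπt : πt = α • ((Pi.single v 1 : Fin n → ℝ) ᵥ*
      (1 - (1 - α) • (Pt + vecMulVec eK (Pi.single v 1)))⁻¹))
    (β : Fin n → ℝ)
    (hβ : ∀ k, β k = πt k / (α + (1 - α) * ∑ k' ∈ K, πt k'))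
    (hubs : ∀ w, π v w =
      (α * U w * πt w + ∑ k ∈ K, πt k * π k w) / (α + (1 - α) * ∑ k ∈ K, πt k))
    (x : ℕ → Fin n → ℝ)
    (hx0 : x 0 = (Pi.single v 1 : Fin n → ℝ))
    (hxs : ∀ i, x (i + 1) = α • (Pi.single v 1 : Fin n → ℝ) + (1 - α) • (x i ᵥ* Pt)) :
    ∀ i, 1 ≤ i →
      (∑ w : Fin n, |π v w - (α * (Pi.single v 1 : Fin n → ℝ) w + ∑ k ∈ K, β k * π k w)|
          ≤ (∑ w ∈ Kᶜ, x i w) - α) ∧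
      (∑ w ∈ Kᶜ, x i w) - α ≤ 1 - α := by
  intro i _
  have hα1' : (0:ℝ) < 1 - α := by linarith
  set e : Fin n → ℝ := (Pi.single v 1 : Fin n → ℝ) with he
  set M : Matrix (Fin n) (Fin n) ℝ := Pt + vecMulVec eK e with hM
  set S : ℝ := ∑ k ∈ K, πt k with hS
  set D : ℝ := α + (1 - α) * S with hD
  -- basic vecMul unfolding
  have hvm : ∀ (q : Fin n → ℝ) (A : Matrix (Fin n) (Fin n) ℝ) (j : Fin n),
      (q ᵥ* A) j = ∑ u, q u * A u j := fun q A j => rfl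
  -- facts about e
  have hev : e v = 1 := by simp [he]
  have hew : ∀ w, w ≠ v → e w = 0 := fun w hw => Pi.single_eq_of_ne hw 1
  have he0 : ∀ w, 0 ≤ e w := by
    intro w
    rcases eq_or_ne w v with rfl | hne
    · rw [hev]; norm_num
    · rw [hew w hne]
  have hesum : ∑ w, e w = 1 := by simp [he, Pi.single_apply]
  have hesumW : ∑ w ∈ Kᶜ, e w = 1 := by
    simp [he, Pi.single_apply, Finset.sum_ite_eq', hv]
  -- facts about Pt
  have hPtK : ∀ u ∈ K, ∀ w, Pt u w = 0 := by
    intro u hu w; simp [hPt, hUdef, hu]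
  have hPt0 : ∀ u w, 0 ≤ Pt u w := by
    intro u w
    simp only [hPt, hUdef, Matrix.of_apply]
    split <;> simp [hP0 u w]
  have hPtrowEq : ∀ u, ∑ w, Pt u w = if u ∈ K then 0 else 1 := by
    intro u
    simp only [hPt, hUdef, Matrix.of_apply]
    split
    · simp
    · simp [hP1 u]
  have hPtrow : ∀ u, ∑ w, Pt u w ≤ 1 := by
    intro u; rw [hPtrowEq]; split <;> norm_num
  -- facts about M
  have hMapp : ∀ u w, M u w = Pt u w + eK u * e w := by
    intro u w; simp [hM, Matrix.add_apply, Matrix.vecMulVec_apply]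
  have heK0 : ∀ u, 0 ≤ eK u := by
    intro u; rw [heK]; dsimp only; split <;> norm_num
  have hM0 : ∀ u w, 0 ≤ M u w := by
    intro u w; rw [hMapp]
    exact add_nonneg (hPt0 u w) (mul_nonneg (heK0 u) (he0 w))
  have hM1 : ∀ u, ∑ w, M u w = 1 := by
    intro u
    simp only [hMapp]
    rw [Finset.sum_add_distrib, hPtrowEq, ← Finset.mul_sum, hesum, heK]
    dsimp only
    split <;> norm_num
  -- the matrix 1 - (1-α)M is invertible
  have hone : ∀ (q : Fin n → ℝ) (B : Matrix (Fin n) (Fin n) ℝ) (j : Fin n),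
      (q ᵥ* (1 - (1 - α) • B)) j = q j - (1 - α) * ∑ u, q u * B u j := by
    intro q B j
    rw [hvm]
    simp only [Matrix.sub_apply, Matrix.smul_apply, Matrix.one_apply, smul_eq_mul, mul_sub]
    rw [Finset.sum_sub_distrib]
    congr 1
    · simp [mul_ite]
    · rw [Finset.mul_sum]
      exact Finset.sum_congr rfl fun u _ => by ring
  have hdet : (1 - (1 - α) • M).det ≠ 0 := by
    rw [Ne, ← Matrix.exists_vecMul_eq_zero_iff]
    rintro ⟨y, hy0, hyA⟩
    have hyj : ∀ j, y j = (1 - α) * ∑ u, y u * M u j := by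
      intro j
      have := congrFun hyA j
      rw [hone] at this
      simp only [Pi.zero_apply] at this
      linarith
    have habs : ∑ j, |y j| ≤ (1 - α) * ∑ u, |y u| := by
      calc ∑ j, |y j| = ∑ j, (1 - α) * |∑ u, y u * M u j| := by
            refine Finset.sum_congr rfl fun j _ => ?_
            rw [hyj j, abs_mul, abs_of_pos hα1']
        _ ≤ ∑ j, (1 - α) * ∑ u, |y u| * M u j := by
            refine Finset.sum_le_sum fun j _ => ?_
            refine mul_le_mul_of_nonneg_left ?_ hα1'.le
            refine (Finset.abs_sum_le_sum_abs _ _).trans ?_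
            refine le_of_eq (Finset.sum_congr rfl fun u _ => ?_)
            rw [abs_mul, abs_of_nonneg (hM0 u j)]
        _ = (1 - α) * ∑ u, |y u| * ∑ j, M u j := by
            rw [← Finset.mul_sum, Finset.sum_comm]
            congr 1
            exact Finset.sum_congr rfl fun u _ => (Finset.mul_sum _ _ _).symm
        _ = (1 - α) * ∑ u, |y u| := by
            congr 1; exact Finset.sum_congr rfl fun u _ => by rw [hM1 u, mul_one]
    obtain ⟨j0, hj0⟩ := Function.ne_iff.mp hy0
    have hpos : 0 < ∑ j, |y j| := by
      refine Finset.sum_pos' (fun j _ => abs_nonneg _) ⟨j0, Finset.mem_univ j0, ?_⟩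
      simpa using abs_pos.mpr hj0
    nlinarith
  -- the fixed point equation
  have hAinv : πt ᵥ* (1 - (1 - α) • M) = α • e := by
    rw [hπt, Matrix.smul_vecMul, Matrix.vecMul_vecMul,
      Matrix.nonsing_inv_mul _ (isUnit_iff_ne_zero.mpr hdet), Matrix.vecMul_one]
  have hfix : ∀ w, πt w = α * e w + (1 - α) * ∑ u, πt u * M u w := by
    intro w
    have := congrFun hAinv w
    rw [hone] at this
    simp only [Pi.smul_apply, smul_eq_mul] at this
    linarith
  -- nonnegativity of πt
  have hπt0 : ∀ w, 0 ≤ πt w := by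
    by_contra hcon
    push_neg at hcon
    obtain ⟨w0, hw0⟩ := hcon
    have hstep : ∀ w, max 0 (-πt w) ≤ (1 - α) * ∑ u, max 0 (-πt u) * M u w := by
      intro w
      have h1 : ∑ u, (-(max 0 (-πt u))) * M u w ≤ ∑ u, πt u * M u w := by
        refine Finset.sum_le_sum fun u _ => ?_
        refine mul_le_mul_of_nonneg_right ?_ (hM0 u w)
        have := le_max_right (0:ℝ) (-πt u)
        linarith
      have h2 : (1 - α) * ∑ u, πt u * M u w ≤ πt w := by
        have := hfix w
        nlinarith [he0 w]
      have h3 : ∑ u, (-(max 0 (-πt u))) * M u w = -∑ u, max 0 (-πt u) * M u w := by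
        rw [← Finset.sum_neg_distrib]
        exact Finset.sum_congr rfl fun u _ => by ring
      have h4 : 0 ≤ ∑ u, max 0 (-πt u) * M u w :=
        Finset.sum_nonneg fun u _ => mul_nonneg (le_max_left _ _) (hM0 u w)
      rw [h3] at h1
      refine max_le (by nlinarith) (by nlinarith)
    have hsum : ∑ w, max 0 (-πt w) ≤ (1 - α) * ∑ w, max 0 (-πt w) := by
      calc ∑ w, max 0 (-πt w) ≤ ∑ w, (1 - α) * ∑ u, max 0 (-πt u) * M u w :=
            Finset.sum_le_sum fun w _ => hstep w
        _ = (1 - α) * ∑ u, max 0 (-πt u) * ∑ w, M u w := by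
            rw [← Finset.mul_sum, Finset.sum_comm]
            congr 1
            exact Finset.sum_congr rfl fun u _ => (Finset.mul_sum _ _ _).symm
        _ = (1 - α) * ∑ w, max 0 (-πt w) := by
            congr 1; exact Finset.sum_congr rfl fun u _ => by rw [hM1 u, mul_one]
    have hNpos : 0 < ∑ w, max 0 (-πt w) := by
      refine Finset.sum_pos' (fun w _ => le_max_left _ _) ⟨w0, Finset.mem_univ w0, ?_⟩
      rw [lt_max_iff]; right; linarith
    nlinarith
  -- fixed point in Pt form
  have hsplit : ∀ (q : Fin n → ℝ) (w : Fin n),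
      ∑ u, q u * M u w = (∑ u, q u * Pt u w) + (∑ u ∈ K, q u) * e w := by
    intro q w
    simp only [hMapp, mul_add]
    rw [Finset.sum_add_distrib]
    congr 1
    rw [heK]
    calc ∑ u, q u * ((if u ∈ K then (1:ℝ) else 0) * e w)
        = ∑ u, (if u ∈ K then q u * e w else 0) := by
          refine Finset.sum_congr rfl fun u _ => ?_
          split <;> ring
      _ = ∑ u ∈ K, q u * e w := by rw [Finset.sum_ite_mem, Finset.univ_inter]
      _ = (∑ u ∈ K, q u) * e w := (Finset.sum_mul _ _ _).symm
  have hfixPt : ∀ w, πt w = D * e w + (1 - α) * ∑ u, πt u * Pt u w := by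
    intro w
    rw [hfix w, hsplit, ← hS, hD]
    ring
  -- πt sums to 1
  have hsum1 : ∑ w, πt w = 1 := by
    have h1 : ∑ w, πt w = D * 1 + (1 - α) * ∑ u, πt u * (∑ w, Pt u w) := by
      calc ∑ w, πt w = ∑ w, (D * e w + (1 - α) * ∑ u, πt u * Pt u w) :=
            Finset.sum_congr rfl fun w _ => hfixPt w
        _ = D * ∑ w, e w + (1 - α) * ∑ u, πt u * (∑ w, Pt u w) := by
            rw [Finset.sum_add_distrib, ← Finset.mul_sum, ← Finset.mul_sum, Finset.sum_comm]
            congr 2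
            exact Finset.sum_congr rfl fun u _ => (Finset.mul_sum _ _ _).symm
        _ = D * 1 + (1 - α) * ∑ u, πt u * (∑ w, Pt u w) := by rw [hesum]
    have h2 : ∑ u, πt u * (∑ w, Pt u w) = (∑ u, πt u) - S := by
      have : ∑ u, πt u * (∑ w, Pt u w) = ∑ u, (πt u - if u ∈ K then πt u else 0) := by
        refine Finset.sum_congr rfl fun u _ => ?_
        rw [hPtrowEq u]
        split <;> ring
      rw [this, Finset.sum_sub_distrib, Finset.sum_ite_mem, Finset.univ_inter, ← hS]
    rw [h2, hD] at h1
    nlinarith [h1]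
  have hS0 : 0 ≤ S := by rw [hS]; exact Finset.sum_nonneg fun k _ => hπt0 k
  have hD0 : (0:ℝ) < D := by rw [hD]; nlinarith
  -- the sequences
  set y : ℕ → Fin n → ℝ := fun i => e ᵥ* Pt ^ i with hy
  set z : ℕ → Fin n → ℝ := fun i => πt ᵥ* Pt ^ i with hz
  set g : ℕ → ℝ := fun i => ∑ w ∈ Kᶜ, z i w with hg
  set h : ℕ → ℝ := fun i => ∑ w ∈ Kᶜ, y i w with hh
  have hysucc : ∀ j w, y (j+1) w = ∑ u, y j u * Pt u w := by
    intro j w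
    rw [hy]
    dsimp only
    rw [pow_succ, ← Matrix.vecMul_vecMul, hvm]
  have hzsucc : ∀ j w, z (j+1) w = ∑ u, z j u * Pt u w := by
    intro j w
    rw [hz]
    dsimp only
    rw [pow_succ, ← Matrix.vecMul_vecMul, hvm]
  have hy0' : ∀ j w, 0 ≤ y j w := by
    intro j
    induction j with
    | zero => intro w; rw [hy]; dsimp only; rw [pow_zero, Matrix.vecMul_one]; exact he0 w
    | succ j ih =>
        intro w
        rw [hysucc]
        exact Finset.sum_nonneg fun u _ => mul_nonneg (ih u) (hPt0 u w)
  have hz0' : ∀ j w, 0 ≤ z j w := by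
    intro j
    induction j with
    | zero => intro w; rw [hz]; dsimp only; rw [pow_zero, Matrix.vecMul_one]; exact hπt0 w
    | succ j ih =>
        intro w
        rw [hzsucc]
        exact Finset.sum_nonneg fun u _ => mul_nonneg (ih u) (hPt0 u w)
  have hmass : ∀ (q : Fin n → ℝ), (∀ u, 0 ≤ q u) →
      ∑ w, ∑ u, q u * Pt u w ≤ ∑ u, q u := by
    intro q hq
    rw [Finset.sum_comm]
    calc ∑ u, ∑ w, q u * Pt u w = ∑ u, q u * ∑ w, Pt u w := by
          exact Finset.sum_congr rfl fun u _ => (Finset.mul_sum _ _ _).symm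
      _ ≤ ∑ u, q u * 1 :=
          Finset.sum_le_sum fun u _ => mul_le_mul_of_nonneg_left (hPtrow u) (hq u)
      _ = ∑ u, q u := by simp
  have hzmass : ∀ j, ∑ w, z j w ≤ 1 := by
    intro j
    induction j with
    | zero =>
        rw [hz]; dsimp only; rw [pow_zero, Matrix.vecMul_one]
        rw [hsum1]
    | succ j ih =>
        calc ∑ w, z (j+1) w = ∑ w, ∑ u, z j u * Pt u w :=
              Finset.sum_congr rfl fun w _ => hzsucc j w
          _ ≤ ∑ u, z j u := hmass _ (hz0' j)
          _ ≤ 1 := ih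
  have hg1 : ∀ j, g j ≤ 1 := by
    intro j
    calc g j ≤ ∑ w, z j w :=
          Finset.sum_le_sum_of_subset_of_nonneg (Finset.subset_univ _)
            (fun w _ _ => hz0' j w)
      _ ≤ 1 := hzmass j
  have hh0 : ∀ j, 0 ≤ h j := fun j => Finset.sum_nonneg fun w _ => hy0' j w
  have hg0 : ∀ j, 0 ≤ g j := fun j => Finset.sum_nonneg fun w _ => hz0' j w
  have hmono : ∀ j, h (j+1) ≤ h j := by
    intro j
    calc h (j+1) = ∑ w ∈ Kᶜ, ∑ u, y j u * Pt u w :=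
          Finset.sum_congr rfl fun w _ => hysucc j w
      _ = ∑ u, y j u * ∑ w ∈ Kᶜ, Pt u w := by
          rw [Finset.sum_comm]
          exact Finset.sum_congr rfl fun u _ => (Finset.mul_sum _ _ _).symm
      _ ≤ ∑ u, (if u ∈ K then 0 else y j u) := by
          refine Finset.sum_le_sum fun u _ => ?_
          split
          · next hu =>
              have : ∑ w ∈ Kᶜ, Pt u w = 0 :=
                Finset.sum_eq_zero fun w _ => hPtK u hu w
              rw [this, mul_zero]
          · next hu =>
              have h1 : ∑ w ∈ Kᶜ, Pt u w ≤ 1 := by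
                refine le_trans ?_ (hPtrow u)
                exact Finset.sum_le_sum_of_subset_of_nonneg (Finset.subset_univ _)
                  (fun w _ _ => hPt0 u w)
              nlinarith [hy0' j u]
      _ = h j := by
          rw [hh]
          dsimp only
          rw [← Finset.univ_inter Kᶜ, ← Finset.sum_ite_mem]
          exact Finset.sum_congr rfl fun u _ => by
            by_cases hu : u ∈ K <;> simp [hu]
  -- recursion for z sums
  have hzrec : ∀ j w, z j w = D * y j w + (1 - α) * z (j+1) w := by
    intro j w
    have h1 : z (j+1) w = ∑ u, (∑ u', πt u' * Pt u' u) * (Pt ^ j) u w := by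
      rw [hz]
      dsimp only
      rw [pow_succ', ← Matrix.vecMul_vecMul, hvm]
      exact Finset.sum_congr rfl fun u _ => by rw [hvm]
    rw [h1, hy, hz]
    dsimp only
    rw [hvm, hvm]
    calc ∑ u, πt u * (Pt ^ j) u w
        = ∑ u, ((D * e u + (1 - α) * ∑ u', πt u' * Pt u' u) * (Pt ^ j) u w) := by
          exact Finset.sum_congr rfl fun u _ => by rw [← hfixPt u]
      _ = D * ∑ u, e u * (Pt ^ j) u w
            + (1 - α) * ∑ u, (∑ u', πt u' * Pt u' u) * (Pt ^ j) u w := by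
          rw [Finset.mul_sum, Finset.mul_sum, ← Finset.sum_add_distrib]
          exact Finset.sum_congr rfl fun u _ => by ring
  have hgrec : ∀ j, g j = D * h j + (1 - α) * g (j+1) := by
    intro j
    rw [hg, hh]
    dsimp only
    rw [Finset.mul_sum, Finset.mul_sum, ← Finset.sum_add_distrib]
    exact Finset.sum_congr rfl fun w _ => hzrec j w
  -- the key inequality by taking limits
  have hQ : ∀ j k, α * g k ≤ D * h k * (1 - (1-α)^j) + α * (1-α)^j := by
    intro j
    induction j with
    | zero =>
        intro k
        simp only [pow_zero, sub_self, mul_zero, zero_add, mul_one]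
        nlinarith [hg1 k]
    | succ j ih =>
        intro k
        have e1 : (1-α)^j ≤ 1 := pow_le_one₀ (by linarith) (by linarith)
        have e2 : (0:ℝ) ≤ (1-α)^j := pow_nonneg (by linarith) j
        have e4 := mul_le_mul_of_nonneg_left (ih (k+1)) hα1'.le
        have e3 : D * h (k+1) ≤ D * h k := mul_le_mul_of_nonneg_left (hmono k) hD0.le
        have e5 : 0 ≤ (1-α) * ((1 - (1-α)^j) * (D * h k - D * h (k+1))) := by
          apply mul_nonneg hα1'.le
          apply mul_nonneg (by linarith) (by linarith)
        rw [hgrec k, pow_succ]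
        linarith [e4, e5]
  have hkey : ∀ k, α * g k ≤ D * h k := by
    intro k
    have hl : Filter.Tendsto (fun j : ℕ => D * h k * (1 - (1-α)^j) + α * (1-α)^j)
        Filter.atTop (nhds (D * h k * (1 - 0) + α * 0)) := by
      have hp : Filter.Tendsto (fun j : ℕ => (1-α)^j) Filter.atTop (nhds 0) :=
        tendsto_pow_atTop_nhds_zero_of_lt_one (by linarith) (by linarith)
      exact (Filter.Tendsto.add (Filter.Tendsto.mul tendsto_const_nhds (Filter.Tendsto.sub tendsto_const_nhds hp))
        (Filter.Tendsto.mul tendsto_const_nhds hp))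
    have := ge_of_tendsto' hl (fun j => hQ j k)
    simpa using this
  -- the error recursion for x
  have hE : ∀ j w, D * x j w - α * πt w
      = (1-α)^j * ∑ u, (D * e u - α * πt u) * (Pt ^ j) u w := by
    intro j
    induction j with
    | zero =>
        intro w
        rw [pow_zero, pow_zero, hx0]
        simp only [one_mul]
        rw [Finset.sum_eq_single w]
        · simp [Matrix.one_apply]
        · intro u _ hu
          simp [Matrix.one_apply, hu]
        · intro hw; exact absurd (Finset.mem_univ w) hw
    | succ j ih =>
        intro w
        have lhs : D * x (j+1) w - α * πt w
            = (1-α) * ∑ u, (D * x j u - α * πt u) * Pt u w := by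
          rw [hxs j]
          simp only [Pi.add_apply, Pi.smul_apply, smul_eq_mul]
          rw [hvm, hfixPt w]
          have hexp : ∑ u, (D * x j u - α * πt u) * Pt u w
              = D * ∑ u, x j u * Pt u w - α * ∑ u, πt u * Pt u w := by
            rw [Finset.mul_sum, Finset.mul_sum, ← Finset.sum_sub_distrib]
            exact Finset.sum_congr rfl fun u _ => by ring
          rw [hexp]
          ring
        rw [lhs]
        calc (1-α) * ∑ u, (D * x j u - α * πt u) * Pt u w
            = (1-α) * ∑ u, ((1-α)^j * ∑ u', (D * e u' - α * πt u') * (Pt ^ j) u' u) * Pt u w := by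
              congr 1
              exact Finset.sum_congr rfl fun u _ => by rw [ih u]
          _ = (1-α) * ∑ u, ∑ u', (1-α)^j * ((D * e u' - α * πt u') * ((Pt ^ j) u' u * Pt u w)) := by
              congr 1
              refine Finset.sum_congr rfl fun u _ => ?_
              rw [mul_assoc, Finset.sum_mul, Finset.mul_sum]
              exact Finset.sum_congr rfl fun u' _ => by ring
          _ = (1-α) * ∑ u', ∑ u, (1-α)^j * ((D * e u' - α * πt u') * ((Pt ^ j) u' u * Pt u w)) := by
              rw [Finset.sum_comm]
          _ = (1-α)^(j+1) * ∑ u', (D * e u' - α * πt u') * (Pt ^ (j+1)) u' w := by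
              rw [pow_succ]
              rw [Finset.mul_sum, Finset.mul_sum]
              refine Finset.sum_congr rfl fun u' _ => ?_
              rw [pow_succ, Matrix.mul_apply, Finset.mul_sum, Finset.mul_sum, Finset.mul_sum]
              exact Finset.sum_congr rfl fun u _ => by ring
  -- bound α πt(W) ≤ D X_i
  have hEsum : ∀ j, D * (∑ w ∈ Kᶜ, x j w) - α * (∑ w ∈ Kᶜ, πt w)
      = (1-α)^j * (D * h j - α * g j) := by
    intro j
    rw [Finset.mul_sum, Finset.mul_sum, ← Finset.sum_sub_distrib]
    calc ∑ w ∈ Kᶜ, (D * x j w - α * πt w)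
        = ∑ w ∈ Kᶜ, (1-α)^j * ∑ u, (D * e u - α * πt u) * (Pt ^ j) u w :=
          Finset.sum_congr rfl fun w _ => hE j w
      _ = (1-α)^j * ∑ w ∈ Kᶜ, (D * y j w - α * z j w) := by
          rw [Finset.mul_sum]
          refine Finset.sum_congr rfl fun w _ => ?_
          congr 1
          rw [hy, hz]
          dsimp only
          rw [hvm, hvm, Finset.mul_sum, Finset.mul_sum, ← Finset.sum_sub_distrib]
          exact Finset.sum_congr rfl fun u _ => by ring
      _ = (1-α)^j * (D * h j - α * g j) := by
          rw [hh, hg]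
          dsimp only
          congr 1
          rw [Finset.mul_sum, Finset.mul_sum, ← Finset.sum_sub_distrib]
  have hXbound : α * (∑ w ∈ Kᶜ, πt w) ≤ D * (∑ w ∈ Kᶜ, x i w) := by
    have h1 := hEsum i
    have h2 := hkey i
    have h3 : (0:ℝ) ≤ (1-α)^i := pow_nonneg (by linarith) i
    nlinarith
  -- x is nonnegative with mass at most 1
  have hxfacts : ∀ j, (∀ w, 0 ≤ x j w) ∧ ∑ w, x j w ≤ 1 := by
    intro j
    induction j with
    | zero =>
        rw [hx0]
        exact ⟨he0, le_of_eq hesum⟩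
    | succ j ih =>
        have hxj1 : ∀ w, x (j+1) w = α * e w + (1-α) * ∑ u, x j u * Pt u w := by
          intro w
          rw [hxs j]
          simp only [Pi.add_apply, Pi.smul_apply, smul_eq_mul]
          rw [hvm]
        constructor
        · intro w
          rw [hxj1]
          have := Finset.sum_nonneg fun u (_ : u ∈ Finset.univ) =>
            mul_nonneg (ih.1 u) (hPt0 u w)
          nlinarith [he0 w]
        · calc ∑ w, x (j+1) w = ∑ w, (α * e w + (1-α) * ∑ u, x j u * Pt u w) :=
              Finset.sum_congr rfl fun w _ => hxj1 w
            _ = α * ∑ w, e w + (1-α) * ∑ w, ∑ u, x j u * Pt u w := by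
                rw [Finset.sum_add_distrib, Finset.mul_sum, Finset.mul_sum]
            _ ≤ α * 1 + (1-α) * 1 := by
                have := (hmass (x j) ih.1).trans ih.2
                rw [hesum]
                nlinarith
            _ = 1 := by ring
  have hXle1 : (∑ w ∈ Kᶜ, x i w) ≤ 1 := by
    calc (∑ w ∈ Kᶜ, x i w) ≤ ∑ w, x i w :=
          Finset.sum_le_sum_of_subset_of_nonneg (Finset.subset_univ _)
            (fun w _ _ => (hxfacts i).1 w)
      _ ≤ 1 := (hxfacts i).2
  -- the error formula
  have herr : ∀ w, π v w - (α * e w + ∑ k ∈ K, β k * π k w)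
      = α * U w * πt w / D - α * e w := by
    intro w
    rw [hubs w]
    have hsb : ∑ k ∈ K, β k * π k w = (∑ k ∈ K, πt k * π k w) / D := by
      rw [Finset.sum_div]
      refine Finset.sum_congr rfl fun k _ => ?_
      rw [hβ k]
      ring
    rw [hsb]
    ring
  have hπtv : D ≤ πt v := by
    have := hfixPt v
    rw [hev, mul_one] at this
    have h4 : 0 ≤ ∑ u, πt u * Pt u v :=
      Finset.sum_nonneg fun u _ => mul_nonneg (hπt0 u) (hPt0 u v)
    nlinarith
  have habs : ∑ w, |π v w - (α * e w + ∑ k ∈ K, β k * π k w)|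
      = α * (∑ w ∈ Kᶜ, πt w) / D - α := by
    rw [← Finset.sum_add_sum_compl K]
    have h1 : ∑ w ∈ K, |π v w - (α * e w + ∑ k ∈ K, β k * π k w)| = 0 := by
      refine Finset.sum_eq_zero fun w hw => ?_
      rw [herr w, hUdef w, if_pos hw, hew w (fun hwv => hv (hwv ▸ hw))]
      simp
    have h2 : ∑ w ∈ Kᶜ, |π v w - (α * e w + ∑ k ∈ K, β k * π k w)|
        = ∑ w ∈ Kᶜ, (α * πt w / D - α * e w) := by
      refine Finset.sum_congr rfl fun w hw => ?_
      rw [herr w, hUdef w, if_neg (Finset.mem_compl.mp hw), mul_one]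
      rcases eq_or_ne w v with rfl | hne
      · rw [hev, mul_one]
        refine abs_of_nonneg ?_
        rw [sub_nonneg, le_div_iff₀ hD0]
        nlinarith
      · rw [hew w hne, mul_zero, sub_zero]
        exact abs_of_nonneg (div_nonneg (mul_nonneg hα0.le (hπt0 w)) hD0.le)
    rw [h1, h2, zero_add]
    rw [Finset.sum_sub_distrib, ← Finset.sum_div, ← Finset.mul_sum, ← Finset.mul_sum, hesumW]
    ring
  constructor
  · rw [habs]
    have : α * (∑ w ∈ Kᶜ, πt w) / D ≤ ∑ w ∈ Kᶜ, x i w := by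
      rw [div_le_iff₀ hD0]
      nlinarith [hXbound]
    linarith
  · linarith [hXle1]
end
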